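/- Construction of the multiplicative formal distribution Lie algebra g_R: let (g, S) be a local lattice Lie algebra over a field F and q ∈ F nonzero. Model g[t,t⁻¹] as the space L of finitely supported families x = (x_m)_{m∈ℤ} with x_m ∈ g, define Σ : L → L by (Σx)_m := q^m·S(x_m), define the bilinear operation β on L by β(x,y)_p := ∑_{k∈ℤ} ∑_{m+n=p} q^{km}·⁅S^k x_m, y_n⁆ (all sums finite), and let M := span_F{Σ(x) − x : x ∈ L}. Then for all x, y, z ∈ L: (1) β(Σ(x) − x, y) = 0; (2) β(x, Σ(y) − y) ∈ M; (3) β(x,y) + β(y,x) ∈ M; (4) β(x, β(y,z)) − β(y, β(x,z)) = β(β(x,y), z). Consequently β descends to a well-defined Lie algebra bracket on the quotient L/M (the Lie algebra g_R = R[t,t⁻¹]/⟨μ_q S − 1⟩ associated to the corresponding multiplicative Lie conformal algebra, with bracket [a t^m, b t^n] = ∑_k q^{km} ⁅S^k a, b⁆ t^{m+n}). -/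

import Mathlib

/-- The map `Σ` on the model `L` of `g[t,t⁻¹]` (families `(x_m)_{m∈ℤ}`):
`(Σx)_m = q^m • S(x_m)`; it represents `μ_q S` where `μ_q(a tᵐ) = qᵐ a tᵐ`. -/
noncomputable def SigMap {F : Type*} [Field F] {g : Type*} [LieRing g] [LieAlgebra F g]
    (q : F) (S : g ≃ₗ[F] g) (x : ℤ → g) : ℤ → g :=
  fun m => q ^ m • S (x m)

/-- The bilinear operation `β` on the model of `g[t,t⁻¹]`:
`β(x,y)_p = ∑_{k∈ℤ} ∑_{m+n=p} q^{km} • ⁅Sᵏ x_m, y_n⁆`. -/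
noncomputable def betMap {F : Type*} [Field F] {g : Type*} [LieRing g] [LieAlgebra F g]
    (q : F) (S : g ≃ₗ[F] g) (x y : ℤ → g) : ℤ → g :=
  fun p => ∑ᶠ k : ℤ, ∑ᶠ m : ℤ, q ^ (k * m) • ⁅(S ^ k) (x m), y (p - m)⁆

/-!
On monomials, `β(a tᵐ, b tⁿ) = [a_λ b] tᵐ⁺ⁿ` at `λ = qᵐ`, where `[a_λ b] = ∑ₖ λᵏ ⁅Sᵏ a, b⁆` is a
finite sum by locality, and `β` is biadditive on finitely supported families; so all four claims
reduce to identities of this λ-bracket. Claims (1) and (2) follow by shifting the summation index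
`k ↦ k + 1` (for (2) using that `S` is a Lie automorphism). For (3), skew-symmetry and `k ↦ -k`
write `[a_λ b] + [b_μ a]` in degree `s` as a sum of terms `v - (qˢ S)ʲ v`, and `qˢ S` is `Σ` in
degree `s`, so each term lies in `M`. For (4), both sides become finite sums over `ℤ × ℤ` that
agree termwise by the Jacobi identity of `g`.
-/

open Function
open scoped Pointwise

theorem hasFiniteSupport_of_snd_mem {α β M : Type*} [Zero M] {f : α × β → M} {s : Set β}
    (hs : s.Finite) (hsupp : ∀ p, f p ≠ 0 → p.2 ∈ s)
    (hfib : ∀ b ∈ s, HasFiniteSupport fun a => f (a, b)) : HasFiniteSupport f :=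
  (hs.biUnion fun b hb => (hfib b hb).prod (Set.finite_singleton b)).subset
    fun p h => Set.mem_biUnion (hsupp p h) ⟨h, rfl⟩

theorem LinearEquiv.zpow_apply_sub_mem {R V : Type*} [Ring R] [AddCommGroup V] [Module R V]
    {e : V ≃ₗ[R] V} {N : Submodule R V} (hN : ∀ v, e v - v ∈ N) (k : ℤ) (v : V) :
    (e ^ k) v - v ∈ N := by
  induction k using Int.induction_on with
  | zero => simp
  | succ k ih =>
    have h := N.add_mem (hN ((e ^ (k : ℤ)) v)) ih
    rwa [sub_add_sub_cancel, ← LinearEquiv.mul_apply, ← zpow_one_add, add_comm] at h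
  | pred k ih =>
    have h := N.sub_mem ih (hN ((e ^ (-(k : ℤ) - 1)) v))
    rwa [← LinearEquiv.mul_apply, ← zpow_one_add, add_sub_cancel, sub_sub_sub_cancel_left] at h

theorem AddMonoidHom.mem_of_forall_single_mem₂ {α β M N P : Type*} [AddZeroClass M]
    [AddZeroClass N] [AddCommMonoid P] (Φ : (α →₀ M) →+ (β →₀ N) →+ P) (K : AddSubmonoid P)
    (h : ∀ a m b n, Φ (Finsupp.single a m) (Finsupp.single b n) ∈ K) (x : α →₀ M)
    (y : β →₀ N) : Φ x y ∈ K := by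
  induction x using Finsupp.induction_linear with
  | zero => simp [K.zero_mem]
  | add x x' hx hx' => simpa using K.add_mem hx hx'
  | single a m =>
    induction y using Finsupp.induction_linear with
    | zero => simp [K.zero_mem]
    | add y y' hy hy' => simpa using K.add_mem hy hy'
    | single b n => exact h a m b n

section LieRing

variable {L : Type*} [LieRing L]

theorem lie_finsum {ι : Type*} {f : ι → L} (hf : HasFiniteSupport f) (x : L) :
    ⁅x, ∑ᶠ i, f i⁆ = ∑ᶠ i, ⁅x, f i⁆ :=
  map_finsum (AddMonoidHom.mk' (fun y => ⁅x, y⁆) (lie_add x)) hf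

theorem finsum_lie {ι : Type*} {f : ι → L} (hf : HasFiniteSupport f) (x : L) :
    ⁅∑ᶠ i, f i, x⁆ = ∑ᶠ i, ⁅f i, x⁆ :=
  map_finsum (AddMonoidHom.mk' (fun y => ⁅y, x⁆) (fun y z => add_lie y z x)) hf

variable (R : Type*) [CommRing R] [LieAlgebra R L]

def lieAutSubgroup : Subgroup (L ≃ₗ[R] L) where
  carrier := {e | ∀ a b : L, e ⁅a, b⁆ = ⁅e a, e b⁆}
  mul_mem' {e e'} he he' a b := by
    rw [LinearEquiv.mul_apply, he' a b, he, LinearEquiv.mul_apply, LinearEquiv.mul_apply]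
  one_mem' _ _ := rfl
  inv_mem' {e} he a b := e.injective <| by
    simp only [LinearEquiv.coe_inv, he _ _, LinearEquiv.apply_symm_apply]

end LieRing

namespace MultiplicativeLieConformal

variable {F : Type*} [Field F] {g : Type*} [LieRing g] [LieAlgebra F g] {q : F} {S : g ≃ₗ[F] g}

theorem zpow_apply_lie (hS : ∀ a b : g, S ⁅a, b⁆ = ⁅S a, S b⁆) (k : ℤ) (a b : g) :
    (S ^ k) ⁅a, b⁆ = ⁅(S ^ k) a, (S ^ k) b⁆ :=
  (lieAutSubgroup (L := g) F).zpow_mem (x := S) hS k a b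

variable (q S)

def IsLocalLattice : Prop := ∀ a b : g, {n : ℤ | ⁅(S ^ n) a, b⁆ ≠ 0}.Finite

/-- The λ-bracket of the associated multiplicative Lie conformal algebra, evaluated at
`λ = q ^ m`. -/
noncomputable def confBracket (m : ℤ) (a b : g) : g := ∑ᶠ k : ℤ, q ^ (k * m) • ⁅(S ^ k) a, b⁆

/-- `Σ` on the degree-`s` component, built in the group of linear automorphisms so that it has
integer powers. -/
noncomputable def sigmaAt (hq : q ≠ 0) (s : ℤ) : g ≃ₗ[F] g :=
  DistribMulAction.toModuleAut F g (Units.mk0 q hq ^ s) * S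

variable {q S}

theorem sigmaAt_apply (hq : q ≠ 0) (s : ℤ) (v : g) : sigmaAt q S hq s v = q ^ s • S v := by
  simp [sigmaAt, Units.smul_def]

theorem sigmaAt_zpow_apply (hq : q ≠ 0) (s k : ℤ) (v : g) :
    (sigmaAt q S hq s ^ k) v = q ^ (k * s) • (S ^ k) v := by
  have hcomm : Commute (DistribMulAction.toModuleAut F g (Units.mk0 q hq ^ s)) S :=
    LinearEquiv.ext fun v => by simp [Units.smul_def]
  rw [sigmaAt, hcomm.mul_zpow, ← map_zpow]
  simp [Units.smul_def, ← zpow_mul, mul_comm]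

theorem hasFiniteSupport_smul_zpow_lie (hloc : IsLocalLattice S) (r : ℤ → F) (a b : g) :
    HasFiniteSupport fun k : ℤ => r k • ⁅(S ^ k) a, b⁆ :=
  (hloc a b).subset (support_smul_subset_right _ _)

theorem confBracket_smul_apply_left (hq : q ≠ 0) (m : ℤ) (a b : g) :
    confBracket q S m (q ^ m • S a) b = confBracket q S m a b := by
  rw [confBracket, confBracket]
  conv_rhs => rw [← finsum_comp_equiv (Equiv.addRight (1 : ℤ))]
  refine finsum_congr fun k => ?_
  rw [map_smul, smul_lie, smul_smul, ← zpow_add₀ hq, Equiv.coe_addRight, zpow_add_one,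
    LinearEquiv.mul_apply, add_mul, one_mul]

theorem confBracket_smul_apply_right (hq : q ≠ 0) (hS : ∀ a b : g, S ⁅a, b⁆ = ⁅S a, S b⁆)
    (m n : ℤ) (a b : g) :
    confBracket q S m a (q ^ n • S b) = q ^ (m + n) • S (confBracket q S m a b) := by
  rw [confBracket, confBracket, AddEquivClass.map_finsum, smul_finsum,
    ← finsum_comp_equiv (Equiv.addLeft (1 : ℤ))]
  refine finsum_congr fun k => ?_
  rw [map_smul, hS, lie_smul, smul_smul, smul_smul, ← zpow_add₀ hq, ← zpow_add₀ hq,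
    Equiv.coe_addLeft, zpow_one_add, LinearEquiv.mul_apply]
  ring_nf

theorem confBracket_add_swap_mem (hq : q ≠ 0) (hS : ∀ a b : g, S ⁅a, b⁆ = ⁅S a, S b⁆)
    (hloc : IsLocalLattice S) {m n : ℤ} {N : Submodule F g}
    (hN : ∀ v, q ^ (m + n) • S v - v ∈ N) (a b : g) :
    confBracket q S m a b + confBracket q S n b a ∈ N := by
  set e := sigmaAt q S hq (m + n)
  set v : ℤ → g := fun k => q ^ (k * m) • ⁅(S ^ k) a, b⁆
  have hv : HasFiniteSupport v := hasFiniteSupport_smul_zpow_lie hloc _ a b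
  -- skew-symmetry: the `(-k)`-th term of `[b_λ a]` is `-(e ^ (-k))` of the `k`-th term of `[a_λ b]`
  have hswap : confBracket q S n b a = -∑ᶠ k, (e ^ (-k)) (v k) := by
    rw [confBracket, ← finsum_neg_distrib, ← finsum_comp_equiv (Equiv.neg ℤ)]
    refine finsum_congr fun k => ?_
    rw [sigmaAt_zpow_apply, map_smul, zpow_apply_lie hS, zpow_neg, LinearEquiv.coe_inv,
      LinearEquiv.symm_apply_apply, smul_smul, ← zpow_add₀ hq, ← lie_skew,
      smul_neg, Equiv.neg_apply, zpow_neg S k, LinearEquiv.coe_inv]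
    ring_nf
  have hfin : HasFiniteSupport fun k => (e ^ (-k)) (v k) :=
    hv.subset fun k hk h => hk (by simp only [h, map_zero])
  have he : ∀ w, e w - w ∈ N := fun w => by simpa only [e, sigmaAt_apply] using hN w
  rw [hswap, confBracket, ← sub_eq_add_neg, ← finsum_sub_distrib hv hfin]
  refine finsum_induction _ N.zero_mem (fun _ _ => N.add_mem) fun k => ?_
  rw [← neg_sub]
  exact N.neg_mem (LinearEquiv.zpow_apply_sub_mem he _ _)


theorem confBracket_confBracket (hq : q ≠ 0) (hloc : IsLocalLattice S) (m n : ℤ) (a b c : g) :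
    confBracket q S m a (confBracket q S n b c)
      = ∑ᶠ k, ∑ᶠ l, q ^ (k * m + l * n) • ⁅(S ^ k) a, ⁅(S ^ l) b, c⁆⁆ := by
  refine finsum_congr fun k => ?_
  rw [confBracket, lie_finsum (hasFiniteSupport_smul_zpow_lie hloc _ b c), smul_finsum]
  refine finsum_congr fun l => ?_
  rw [lie_smul, smul_smul, ← zpow_add₀ hq]

theorem confBracket_confBracket_left (hq : q ≠ 0) (hS : ∀ a b : g, S ⁅a, b⁆ = ⁅S a, S b⁆)
    (hloc : IsLocalLattice S) (m n : ℤ) (a b c : g) :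
    confBracket q S (m + n) (confBracket q S m a b) c
      = ∑ᶠ l, ∑ᶠ k, q ^ (k * m + l * n) • ⁅⁅(S ^ k) a, (S ^ l) b⁆, c⁆ := by
  refine finsum_congr fun l => ?_
  have hab := hasFiniteSupport_smul_zpow_lie hloc (fun j => q ^ (j * m)) a b
  rw [confBracket, map_finsum _ hab, finsum_lie (hab.fun_comp (map_zero _)), smul_finsum]
  conv_rhs => rw [← finsum_comp_equiv (Equiv.addLeft l)]
  refine finsum_congr fun j => ?_
  rw [map_smul, zpow_apply_lie hS, Equiv.coe_addLeft, zpow_add, LinearEquiv.mul_apply, smul_lie,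
    smul_smul, ← zpow_add₀ hq]
  ring_nf

theorem confBracket_jacobi (hq : q ≠ 0) (hS : ∀ a b : g, S ⁅a, b⁆ = ⁅S a, S b⁆)
    (hloc : IsLocalLattice S) (m n : ℤ) (a b c : g) :
    confBracket q S m a (confBracket q S n b c) - confBracket q S n b (confBracket q S m a c)
      = confBracket q S (m + n) (confBracket q S m a b) c := by
  set T₁ : ℤ × ℤ → g := fun p => q ^ (p.1 * m + p.2 * n) • ⁅(S ^ p.1) a, ⁅(S ^ p.2) b, c⁆⁆
  set T₂ : ℤ × ℤ → g := fun p => q ^ (p.2 * n + p.1 * m) • ⁅(S ^ p.2) b, ⁅(S ^ p.1) a, c⁆⁆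
  have hT₁ : HasFiniteSupport T₁ :=
    hasFiniteSupport_of_snd_mem (hloc b c) (fun p hp h => hp (by simp [T₁, h])) fun l _ =>
      hasFiniteSupport_smul_zpow_lie hloc (fun k => q ^ (k * m + l * n)) a ⁅(S ^ l) b, c⁆
  have hT₂ : HasFiniteSupport fun p : ℤ × ℤ => T₂ p.swap :=
    hasFiniteSupport_of_snd_mem (hloc a c) (fun p hp h => hp (by simp [T₂, h])) fun k _ =>
      hasFiniteSupport_smul_zpow_lie hloc (fun l => q ^ (l * n + k * m)) b ⁅(S ^ k) a, c⁆
  have hT₁' : HasFiniteSupport fun p : ℤ × ℤ => T₁ p.swap :=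
    hT₁.comp_of_injective Prod.swap_injective
  have h₁ : confBracket q S m a (confBracket q S n b c) = ∑ᶠ p, T₁ p :=
    (confBracket_confBracket hq hloc m n a b c).trans (finsum_curry _ hT₁).symm
  have h₂ : confBracket q S n b (confBracket q S m a c) = ∑ᶠ p : ℤ × ℤ, T₂ p.swap :=
    (confBracket_confBracket hq hloc n m b a c).trans (finsum_curry _ hT₂).symm
  have h₃ : confBracket q S (m + n) (confBracket q S m a b) c
      = ∑ᶠ p : ℤ × ℤ, (T₁ p.swap - T₂ p.swap) := by
    rw [confBracket_confBracket_left hq hS hloc,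
      finsum_curry (fun p : ℤ × ℤ => T₁ p.swap - T₂ p.swap) (hT₁'.sub hT₂)]
    refine finsum_congr fun l => finsum_congr fun k => ?_
    simp only [T₁, T₂, Prod.swap_prod_mk, add_comm (l * n), ← smul_sub, lie_lie]
  rw [h₁, h₂, h₃, finsum_sub_distrib hT₁' hT₂]
  congr 1
  exact (finsum_comp_equiv (Equiv.prodComm ℤ ℤ)).symm

theorem hasFiniteSupport_betMap_summand (hloc : IsLocalLattice S) {x : ℤ → g}
    (hx : HasFiniteSupport x) (y : ℤ → g) (p : ℤ) :
    HasFiniteSupport fun km : ℤ × ℤ => q ^ (km.1 * km.2) • ⁅(S ^ km.1) (x km.2), y (p - km.2)⁆ :=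
  hasFiniteSupport_of_snd_mem hx (fun km hkm h => hkm (by simp [h])) fun m _ =>
    hasFiniteSupport_smul_zpow_lie hloc (fun k => q ^ (k * m)) (x m) (y (p - m))

theorem betMap_eq_finsum_prod (hloc : IsLocalLattice S) {x : ℤ → g} (hx : HasFiniteSupport x)
    (y : ℤ → g) (p : ℤ) :
    betMap q S x y p = ∑ᶠ km : ℤ × ℤ, q ^ (km.1 * km.2) • ⁅(S ^ km.1) (x km.2), y (p - km.2)⁆ :=
  (finsum_curry _ (hasFiniteSupport_betMap_summand hloc hx y p)).symm

theorem betMap_add_left (hloc : IsLocalLattice S) {x x' : ℤ → g} (hx : HasFiniteSupport x)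
    (hx' : HasFiniteSupport x') (y : ℤ → g) :
    betMap q S (x + x') y = betMap q S x y + betMap q S x' y := by
  ext p
  rw [Pi.add_apply, betMap_eq_finsum_prod hloc (hx.add hx'), betMap_eq_finsum_prod hloc hx, betMap_eq_finsum_prod hloc hx',
    ← finsum_add_distrib (hasFiniteSupport_betMap_summand hloc hx y p)
      (hasFiniteSupport_betMap_summand hloc hx' y p)]
  simp only [Pi.add_apply, map_add, add_lie, smul_add]

theorem betMap_add_right (hloc : IsLocalLattice S) {x : ℤ → g} (hx : HasFiniteSupport x)
    (y y' : ℤ → g) : betMap q S x (y + y') = betMap q S x y + betMap q S x y' := by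
  ext p
  rw [Pi.add_apply, betMap_eq_finsum_prod hloc hx, betMap_eq_finsum_prod hloc hx, betMap_eq_finsum_prod hloc hx,
    ← finsum_add_distrib (hasFiniteSupport_betMap_summand hloc hx y p)
      (hasFiniteSupport_betMap_summand hloc hx y' p)]
  simp only [Pi.add_apply, lie_add, smul_add]

theorem hasFiniteSupport_betMap (hloc : IsLocalLattice S) {x y : ℤ → g}
    (hx : HasFiniteSupport x) (hy : HasFiniteSupport y) : HasFiniteSupport (betMap q S x y) := by
  refine (Set.Finite.add hx hy).subset fun p hp => ?_
  obtain ⟨⟨k, m⟩, hkm⟩ :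
      ∃ km : ℤ × ℤ, q ^ (km.1 * km.2) • ⁅(S ^ km.1) (x km.2), y (p - km.2)⁆ ≠ 0 := by
    by_contra! h
    exact hp (by rw [betMap_eq_finsum_prod hloc hx]; exact finsum_eq_zero_of_forall_eq_zero h)
  have hxm : x m ≠ 0 := fun h => hkm (by simp [h])
  have hym : y (p - m) ≠ 0 := fun h => hkm (by simp [h])
  exact Set.mem_add.mpr ⟨m, hxm, p - m, hym, add_sub_cancel m p⟩

variable (q S)

noncomputable def sigma : (ℤ →₀ g) →+ (ℤ →₀ g) :=
  AddMonoidHom.mk'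
    (fun x => Finsupp.ofSupportFinite (SigMap q S ⇑x)
      (x.hasFiniteSupport.subset fun m hm h => hm (by simp [SigMap, h])))
    fun x y => Finsupp.ext fun m => by simp [Finsupp.ofSupportFinite_coe, SigMap, smul_add]

noncomputable def bracket (hloc : IsLocalLattice S) : (ℤ →₀ g) →+ (ℤ →₀ g) →+ (ℤ →₀ g) :=
  AddMonoidHom.mk'
    (fun x => AddMonoidHom.mk'
      (fun y => Finsupp.ofSupportFinite (betMap q S ⇑x ⇑y)
        (hasFiniteSupport_betMap hloc x.hasFiniteSupport y.hasFiniteSupport))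
      fun y y' => DFunLike.ext' (betMap_add_right hloc x.hasFiniteSupport y y'))
    fun x x' => AddMonoidHom.ext fun y =>
      DFunLike.ext' (betMap_add_left hloc x.hasFiniteSupport x'.hasFiniteSupport y)

variable {q S}

theorem coe_sigma (x : ℤ →₀ g) : ⇑(sigma q S x) = SigMap q S ⇑x := rfl

theorem coe_bracket (hloc : IsLocalLattice S) (x y : ℤ →₀ g) :
    ⇑(bracket q S hloc x y) = betMap q S ⇑x ⇑y := rfl

theorem sigma_single (s : ℤ) (v : g) :
    sigma q S (Finsupp.single s v) = Finsupp.single s (q ^ s • S v) := by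
  ext p
  rcases eq_or_ne s p with rfl | hp
  · simp [coe_sigma, SigMap]
  · simp [coe_sigma, SigMap, Finsupp.single_eq_of_ne' hp]

theorem bracket_single_single (hloc : IsLocalLattice S) (m n : ℤ) (a b : g) :
    bracket q S hloc (Finsupp.single m a) (Finsupp.single n b)
      = Finsupp.single (m + n) (confBracket q S m a b) := by
  ext p
  have hcollapse : ∀ k : ℤ, ∑ᶠ m', q ^ (k * m') •
      ⁅(S ^ k) (Finsupp.single m a m'), Finsupp.single n b (p - m')⁆
        = q ^ (k * m) • ⁅(S ^ k) a, Finsupp.single n b (p - m)⁆ := fun k => by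
    rw [finsum_eq_single _ m fun m' hm' => by simp [Finsupp.single_eq_of_ne hm'],
      Finsupp.single_eq_same]
  rw [coe_bracket, betMap]
  simp only [hcollapse]
  rcases eq_or_ne (m + n) p with rfl | hp
  · simp [confBracket]
  · rw [Finsupp.single_eq_of_ne' hp, Finsupp.single_eq_of_ne' (show n ≠ p - m by omega)]
    simp

theorem bracket_sigma_left (hq : q ≠ 0) (hloc : IsLocalLattice S) (x y : ℤ →₀ g) :
    bracket q S hloc (sigma q S x) y = bracket q S hloc x y := by
  have h : (bracket q S hloc).comp (sigma q S) = bracket q S hloc :=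
    Finsupp.addHom_ext fun m a => Finsupp.addHom_ext fun n b => by
      simp [sigma_single, bracket_single_single, confBracket_smul_apply_left hq]
  exact DFunLike.congr_fun (DFunLike.congr_fun h x) y

theorem bracket_sigma_right (hq : q ≠ 0) (hS : ∀ a b : g, S ⁅a, b⁆ = ⁅S a, S b⁆)
    (hloc : IsLocalLattice S) (x y : ℤ →₀ g) :
    bracket q S hloc x (sigma q S y) = sigma q S (bracket q S hloc x y) := by
  have h : (bracket q S hloc).compl₂ (sigma q S) = (bracket q S hloc).compr₂ (sigma q S) :=
    Finsupp.addHom_ext fun m a => Finsupp.addHom_ext fun n b => by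
      simp [sigma_single, bracket_single_single, confBracket_smul_apply_right hq hS]
  exact DFunLike.congr_fun (DFunLike.congr_fun h x) y

theorem sigma_sub_self_mem {M : Submodule F (ℤ → g)}
    (hM : M = Submodule.span F {h : ℤ → g | ∃ x : ℤ →₀ g, h = SigMap q S ⇑x - ⇑x})
    (x : ℤ →₀ g) : ⇑(sigma q S x - x) ∈ M :=
  hM ▸ Submodule.subset_span ⟨x, rfl⟩

theorem bracket_add_swap_mem (hq : q ≠ 0) (hS : ∀ a b : g, S ⁅a, b⁆ = ⁅S a, S b⁆)
    (hloc : IsLocalLattice S) {M : Submodule F (ℤ → g)}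
    (hM : ∀ x : ℤ →₀ g, ⇑(sigma q S x - x) ∈ M) (x y : ℤ →₀ g) :
    ⇑(bracket q S hloc x y + bracket q S hloc y x) ∈ M := by
  refine AddMonoidHom.mem_of_forall_single_mem₂ (bracket q S hloc + (bracket q S hloc).flip)
    (M.comap Finsupp.lcoeFun).toAddSubmonoid (fun m a n b => ?_) x y
  simp only [AddMonoidHom.add_apply, AddMonoidHom.flip_apply, bracket_single_single,
    add_comm n m, ← Finsupp.single_add]
  refine confBracket_add_swap_mem hq hS hloc
    (N := (M.comap Finsupp.lcoeFun).comap (Finsupp.lsingle (m + n))) (fun v => ?_) a b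
  simpa [Finsupp.single_sub, sigma_single] using hM (Finsupp.single (m + n) v)

theorem bracket_jacobi (hq : q ≠ 0) (hS : ∀ a b : g, S ⁅a, b⁆ = ⁅S a, S b⁆)
    (hloc : IsLocalLattice S) (x y z : ℤ →₀ g) :
    bracket q S hloc x (bracket q S hloc y z) - bracket q S hloc y (bracket q S hloc x z)
      = bracket q S hloc (bracket q S hloc x y) z := by
  induction x using Finsupp.induction_linear with
  | zero => simp
  | add x x' hx hx' => simp only [map_add, AddMonoidHom.add_apply, ← hx, ← hx']; abel
  | single m a =>
    induction y using Finsupp.induction_linear with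
    | zero => simp
    | add y y' hy hy' => simp only [map_add, AddMonoidHom.add_apply, ← hy, ← hy']; abel
    | single n b =>
      induction z using Finsupp.induction_linear with
      | zero => simp
      | add z z' hz hz' => simp only [map_add, ← hz, ← hz']; abel
      | single r c =>
        simp only [bracket_single_single]
        rw [add_left_comm n m r, ← add_assoc m n r, ← Finsupp.single_sub,
          confBracket_jacobi hq hS hloc]

end MultiplicativeLieConformal

open MultiplicativeLieConformal in
/-- construction of the multiplicative formal distribution Lie algebra
`g_R = R[t,t⁻¹]/⟨μ_q S − 1⟩`.  With `L` the space of finitely supported families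
(`ℤ →₀ g`), `Σ`, `β` as above, and `M = span_F {Σ(x) − x : x ∈ L}`:
(1) `β(Σ(x) − x, y) = 0`; (2) `β(x, Σ(y) − y) ∈ M`; (3) `β(x,y) + β(y,x) ∈ M`;
(4) `β(x, β(y,z)) − β(y, β(x,z)) = β(β(x,y), z)`.
(Consequently `β` descends to a Lie bracket on `L/M`.) -/
theorem stmt_10 (F : Type*) [Field F] (q : F) (hq : q ≠ 0)
    (g : Type*) [LieRing g] [LieAlgebra F g]
    (S : g ≃ₗ[F] g) (hS : ∀ a b : g, S ⁅a, b⁆ = ⁅S a, S b⁆)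
    (hloc : ∀ a b : g, {n : ℤ | ⁅(S ^ n) a, b⁆ ≠ 0}.Finite)
    (M : Submodule F (ℤ → g))
    (hM : M = Submodule.span F {h : ℤ → g | ∃ x : ℤ →₀ g, h = SigMap q S ⇑x - ⇑x}) :
    (∀ x y : ℤ →₀ g, betMap q S (SigMap q S ⇑x - ⇑x) ⇑y = 0)
    ∧ (∀ x y : ℤ →₀ g, betMap q S ⇑x (SigMap q S ⇑y - ⇑y) ∈ M)
    ∧ (∀ x y : ℤ →₀ g, betMap q S ⇑x ⇑y + betMap q S ⇑y ⇑x ∈ M)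
    ∧ (∀ x y z : ℤ →₀ g,
        betMap q S ⇑x (betMap q S ⇑y ⇑z) - betMap q S ⇑y (betMap q S ⇑x ⇑z)
          = betMap q S (betMap q S ⇑x ⇑y) ⇑z) := by
  replace hloc : IsLocalLattice S := hloc
  have hσ (x : ℤ →₀ g) : SigMap q S ⇑x - ⇑x = ⇑(sigma q S x - x) := rfl
  have hgen := sigma_sub_self_mem hM
  refine ⟨fun x y => ?_, fun x y => ?_, fun x y => ?_, fun x y z => ?_⟩
  · rw [hσ, ← coe_bracket hloc, map_sub, AddMonoidHom.sub_apply, bracket_sigma_left hq hloc,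
      sub_self, Finsupp.coe_zero]
  · rw [hσ, ← coe_bracket hloc, map_sub, bracket_sigma_right hq hS hloc]
    exact hgen _
  · exact bracket_add_swap_mem hq hS hloc hgen x y
  · simpa only [Finsupp.coe_sub, coe_bracket] using
      congrArg (fun f : ℤ →₀ g => ⇑f) (bracket_jacobi hq hS hloc x y z)
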